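/- If 𝒜 is an α-invariant C*-subalgebra of BUC(ℂⁿ) that contains a nonzero function from C₀(ℂⁿ), then C₀(ℂⁿ) ⊆ 𝒜. -/

import Mathlib

open MeasureTheory Complex Filter
open scoped ENNReal Topology

noncomputable section

/-- `ℂⁿ` -/
abbrev Cn (n : ℕ) := Fin n → ℂ

/-- squared Euclidean norm `|z|²` on `ℂⁿ` -/
def nsq {n : ℕ} (z : Cn n) : ℝ := ∑ i, ‖z i‖ ^ 2

/-- `z·w̄ = ∑ zᵢ w̄ᵢ` -/
def cdot {n : ℕ} (z w : Cn n) : ℂ := ∑ i, z i * (starRingEnd ℂ) (w i)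

/-- the Gaussian measure `dμ_t(z) = (πt)^{-n} e^{-|z|²/t} dV(z)` on `ℂⁿ` -/
def gaussian (n : ℕ) (t : ℝ) : Measure (Cn n) :=
  volume.withDensity (fun z => ENNReal.ofReal (((Real.pi * t) ^ n)⁻¹ * Real.exp (-nsq z / t)))

/-- the reproducing kernel `K_z^t(w) = e^{(w·z̄)/t}` -/
def Kfun {n : ℕ} (t : ℝ) (z w : Cn n) : ℂ := Complex.exp (cdot w z / t)

/-- the normalized reproducing kernel `k_z^t(w) = e^{(w·z̄)/t - |z|²/(2t)}` -/
def kfun {n : ℕ} (t : ℝ) (z w : Cn n) : ℂ :=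
  Complex.exp (cdot w z / t - (nsq z / (2 * t) : ℝ))

/-- the Weyl operator `(W_z f)(w) = k_z^t(w) f(w-z)` acting on functions -/
def weylFun {n : ℕ} (t : ℝ) (z : Cn n) (g : Cn n → ℂ) : Cn n → ℂ :=
  fun w => kfun t z w * g (w - z)

/-- the parity operator `(Uf)(w) = f(-w)` acting on functions -/
def parityFun {n : ℕ} (g : Cn n → ℂ) : Cn n → ℂ := fun w => g (-w)

open scoped ZeroAtInfty

/-! `𝒜 ∩ C₀(ℂⁿ)` is a star subalgebra of `C₀(ℂⁿ)` containing every translate of some nonzero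
`f₀`. It therefore vanishes nowhere, and it separates points: if all translates of `f₀` agreed at
`a ≠ b`, then `f₀` would be `(b - a)`-periodic, hence zero, as it vanishes at infinity.
Stone–Weierstrass on the one-point compactification, applied to `ℂ·1 + 𝒜 ∩ C₀`, makes it dense
in `C₀(ℂⁿ)`, and `𝒜` is uniformly closed. -/

section Periodic

variable {E F : Type*} [AddCommGroup E] [TopologicalSpace E] [IsTopologicalAddGroup E]
  [Module ℝ E] [ContinuousSMul ℝ E] [T2Space E] [TopologicalSpace F] [T2Space F]

theorem Function.Periodic.eq_of_tendsto_cocompact {f : E → F} {p : E} {y : F}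
    (hf : Function.Periodic f p) (hp : p ≠ 0) (hlim : Tendsto f (cocompact E) (𝓝 y)) (x : E) :
    f x = y := by
  have hmul : Tendsto (fun k : ℕ => x + (k : ℝ) • p) atTop (cocompact E) :=
    (Homeomorph.addLeft x).isClosedEmbedding.tendsto_cocompact.comp <|
      (isClosedEmbedding_smul_left hp).tendsto_cocompact.comp <|
        tendsto_natCast_atTop_atTop.mono_right atTop_le_cocompact
  refine tendsto_nhds_unique (tendsto_const_nhds.congr fun k => ?_) (hlim.comp hmul)
  simpa [Nat.cast_smul_eq_nsmul] using (hf.nsmul k x).symm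

theorem exists_sub_apply_ne_sub_apply [Zero F] {f : E → F} (hf : f ≠ 0)
    (hlim : Tendsto f (cocompact E) (𝓝 0)) {a b : E} (hab : a ≠ b) :
    ∃ z, f (a - z) ≠ f (b - z) := by
  by_contra! h
  have hper : Function.Periodic f (b - a) := fun u => by
    convert (h (a - u)).symm using 2 <;> abel
  exact hf (funext (hper.eq_of_tendsto_cocompact (sub_ne_zero.2 hab.symm) hlim))

end Periodic

namespace ZeroAtInftyContinuousMap

lemma dist_apply_le_dist {X β : Type*} [TopologicalSpace X] [PseudoMetricSpace β] [Zero β]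
    (f g : C₀(X, β)) (x : X) : dist (f x) (g x) ≤ dist f g :=
  (BoundedContinuousFunction.dist_coe_le_dist (f := f.toBCF) (g := g.toBCF) x).trans_eq
    dist_toBCF_eq_dist

variable {X 𝕜 : Type*} [TopologicalSpace X] [T2Space X] [RCLike 𝕜]

def toOnePoint : C₀(X, 𝕜) →⋆ₙₐ[𝕜] C(OnePoint X, 𝕜) where
  toFun f :=
    OnePoint.continuousMapMk f 0 (coclosedCompact_eq_cocompact (X := X) ▸ f.zero_at_infty')
  map_smul' c f := by ext x; induction x using OnePoint.rec <;> simp [OnePoint.continuousMapMk]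
  map_zero' := by ext x; induction x using OnePoint.rec <;> simp [OnePoint.continuousMapMk]
  map_add' f g := by ext x; induction x using OnePoint.rec <;> simp [OnePoint.continuousMapMk]
  map_mul' f g := by ext x; induction x using OnePoint.rec <;> simp [OnePoint.continuousMapMk]
  map_star' f := by ext x; induction x using OnePoint.rec <;> simp [OnePoint.continuousMapMk]

@[simp] lemma toOnePoint_coe (f : C₀(X, 𝕜)) (x : X) : toOnePoint f x = f x := rfl
@[simp] lemma toOnePoint_infty (f : C₀(X, 𝕜)) : toOnePoint f OnePoint.infty = 0 := rfl

lemma exists_eq_algebraMap_add_toOnePoint {A : NonUnitalStarSubalgebra 𝕜 C₀(X, 𝕜)}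
    {F : C(OnePoint X, 𝕜)}
    (hF : F ∈ StarAlgebra.adjoin 𝕜 (A.map toOnePoint : Set C(OnePoint X, 𝕜))) :
    ∃ c : 𝕜, ∃ f ∈ A, F = algebraMap 𝕜 _ c + toOnePoint f := by
  rw [← StarSubalgebra.mem_toSubalgebra, ← Subalgebra.mem_toSubmodule,
    StarAlgebra.adjoin_nonUnitalStarSubalgebra_eq_span, Submodule.mem_sup] at hF
  obtain ⟨_, hc, _, ⟨f, hf, rfl⟩, rfl⟩ := hF
  obtain ⟨c, rfl⟩ := Submodule.mem_span_singleton.1 hc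
  exact ⟨c, f, hf, by rw [Algebra.algebraMap_eq_smul_one]; rfl⟩

lemma separatesPoints_starAlgebraAdjoin_map_toOnePoint (A : NonUnitalStarSubalgebra 𝕜 C₀(X, 𝕜))
    (hsep : ∀ x y : X, x ≠ y → ∃ f ∈ A, f x ≠ f y) (hnv : ∀ x : X, ∃ f ∈ A, f x ≠ 0) :
    (StarAlgebra.adjoin 𝕜 (A.map toOnePoint : Set C(OnePoint X, 𝕜))).SeparatesPoints := by
  suffices h : ∀ x y : OnePoint X, x ≠ y → ∃ f ∈ A, toOnePoint f x ≠ toOnePoint f y by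
    intro x y hxy
    obtain ⟨f, hf, hfxy⟩ := h x y hxy
    exact ⟨_, ⟨toOnePoint f, StarAlgebra.subset_adjoin _ _ ⟨f, hf, rfl⟩, rfl⟩, hfxy⟩
  intro x y hxy
  induction x using OnePoint.rec with
  | infty =>
    induction y using OnePoint.rec with
    | infty => exact absurd rfl hxy
    | coe y => obtain ⟨f, hf, hfy⟩ := hnv y; exact ⟨f, hf, by simpa using hfy.symm⟩
  | coe x =>
    induction y using OnePoint.rec with
    | infty => obtain ⟨f, hf, hfx⟩ := hnv x; exact ⟨f, hf, by simpa using hfx⟩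
    | coe y => simpa using hsep x y (ne_of_apply_ne _ hxy)

lemma dist_le_two_mul_dist_toOnePoint (f g : C₀(X, 𝕜)) (c : 𝕜) :
    dist g f ≤ 2 * dist (toOnePoint g) (algebraMap 𝕜 _ c + toOnePoint f) := by
  set D := dist (toOnePoint g) (algebraMap 𝕜 _ c + toOnePoint f)
  have hc : ‖c‖ ≤ D := by
    simpa [D] using ContinuousMap.dist_apply_le_dist (f := toOnePoint g)
      (g := algebraMap 𝕜 _ c + toOnePoint f) OnePoint.infty
  rw [← dist_toBCF_eq_dist]
  refine (BoundedContinuousFunction.dist_le (by positivity)).2 fun x => ?_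
  have hx : dist (g x) (c + f x) ≤ D := by
    simpa [D] using ContinuousMap.dist_apply_le_dist (f := toOnePoint g)
      (g := algebraMap 𝕜 _ c + toOnePoint f) (x : OnePoint X)
  calc dist (g x) (f x) ≤ dist (g x) (c + f x) + dist (c + f x) (f x) := dist_triangle _ _ _
    _ ≤ D + D := by gcongr; simpa using hc
    _ = 2 * D := by ring

theorem nonUnitalStarSubalgebra_topologicalClosure_eq_top_of_separatesPoints
    (A : NonUnitalStarSubalgebra 𝕜 C₀(X, 𝕜)) (hsep : ∀ x y : X, x ≠ y → ∃ f ∈ A, f x ≠ f y)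
    (hnv : ∀ x : X, ∃ f ∈ A, f x ≠ 0) : A.topologicalClosure = ⊤ := by
  set B := StarAlgebra.adjoin 𝕜 (A.map toOnePoint : Set C(OnePoint X, 𝕜))
  have hB : B.topologicalClosure = ⊤ :=
    ContinuousMap.starSubalgebra_topologicalClosure_eq_top_of_separatesPoints B
      (separatesPoints_starAlgebraAdjoin_map_toOnePoint A hsep hnv)
  refine NonUnitalStarAlgebra.eq_top_iff.2 fun g => Metric.mem_closure_iff.2 fun ε hε => ?_
  have hg : toOnePoint g ∈ B.topologicalClosure := by rw [hB]; exact StarSubalgebra.mem_top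
  obtain ⟨F, hF, hgF⟩ := Metric.mem_closure_iff.1 hg (ε / 2) (half_pos hε)
  obtain ⟨c, f, hf, rfl⟩ := exists_eq_algebraMap_add_toOnePoint hF
  exact ⟨f, hf, (dist_le_two_mul_dist_toOnePoint f g c).trans_lt (by linarith)⟩

end ZeroAtInftyContinuousMap

/-- If `𝒜` is a translation-invariant C*-subalgebra of `BUC(ℂⁿ)`
containing a nonzero function from `C₀(ℂⁿ)`, then `C₀(ℂⁿ) ⊆ 𝒜`. -/
theorem C0_subset_of_invariant_Cstar_subalgebra (n : ℕ) (𝒜 : Set (Cn n → ℂ))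
    (hBUC : ∀ f ∈ 𝒜, UniformContinuous f ∧ ∃ C, ∀ w, ‖f w‖ ≤ C)
    (hadd : ∀ f ∈ 𝒜, ∀ g ∈ 𝒜, f + g ∈ 𝒜)
    (hsmul : ∀ (c : ℂ), ∀ f ∈ 𝒜, c • f ∈ 𝒜)
    (hmul : ∀ f ∈ 𝒜, ∀ g ∈ 𝒜, f * g ∈ 𝒜)
    (hstar : ∀ f ∈ 𝒜, (fun w => (starRingEnd ℂ) (f w)) ∈ 𝒜)
    (hclosed : ∀ f : Cn n → ℂ,
      (∀ ε > (0 : ℝ), ∃ g ∈ 𝒜, ∀ w, ‖f w - g w‖ ≤ ε) → f ∈ 𝒜)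
    (hinv : ∀ f ∈ 𝒜, ∀ z : Cn n, (fun w => f (w - z)) ∈ 𝒜)
    (h0 : ∃ f ∈ 𝒜, f ≠ 0 ∧ Tendsto f (cocompact (Cn n)) (𝓝 0)) :
    ∀ g : Cn n → ℂ, Continuous g → Tendsto g (cocompact (Cn n)) (𝓝 0) → g ∈ 𝒜 := by
  intro g hg hg0
  obtain ⟨f₀, hf₀, hf₀ne, hf₀0⟩ := h0
  let A : NonUnitalStarSubalgebra ℂ C₀(Cn n, ℂ) :=
    { carrier := {f | ⇑f ∈ 𝒜}
      add_mem' := fun hf hg => hadd _ hf _ hg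
      zero_mem' := by simpa using hsmul 0 f₀ hf₀
      mul_mem' := fun hf hg => hmul _ hf _ hg
      smul_mem' := fun c _ hf => hsmul c _ hf
      star_mem' := fun hf => hstar _ hf }
  let F₀ : C₀(Cn n, ℂ) := ⟨⟨f₀, (hBUC f₀ hf₀).1.continuous⟩, hf₀0⟩
  have htrans (z : Cn n) : F₀.comp (Homeomorph.subRight z).toCocompactMap ∈ A := hinv f₀ hf₀ z
  have hsep (a b : Cn n) (hab : a ≠ b) : ∃ f ∈ A, f a ≠ f b :=
    let ⟨z, hz⟩ := exists_sub_apply_ne_sub_apply hf₀ne hf₀0 hab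
    ⟨_, htrans z, hz⟩
  have hnv (a : Cn n) : ∃ f ∈ A, f a ≠ 0 :=
    let ⟨c, hc⟩ := Function.ne_iff.1 hf₀ne
    ⟨_, htrans (a - c), by simpa [F₀] using hc⟩
  have hgA : (⟨⟨g, hg⟩, hg0⟩ : C₀(Cn n, ℂ)) ∈ A.topologicalClosure :=
    (ZeroAtInftyContinuousMap.nonUnitalStarSubalgebra_topologicalClosure_eq_top_of_separatesPoints
      A hsep hnv).symm ▸ NonUnitalStarAlgebra.mem_top
  refine hclosed g fun ε hε => ?_
  obtain ⟨f, hf, hdist⟩ := Metric.mem_closure_iff.1 hgA ε hε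
  refine ⟨f, hf, fun w => ?_⟩
  rw [← dist_eq_norm]
  exact (ZeroAtInftyContinuousMap.dist_apply_le_dist _ f w).trans hdist.le
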